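/- arXiv:2512.03452 — 2 statements merged into one kernel-verified Lean document; each statement's English description precedes it below -/
import Mathlib

section
/- For λ1, λ2, λ3 ∈ [0,1], the sum over all (j1,j2,j3) ∈ {0,1}^3 of ∏_{s=1}^3 (1 - j_s + (2j_s - 1)λ_s), i.e., λ1λ2λ3 + λ1λ2(1-λ3) + ... + (1-λ1)(1-λ2)(1-λ3), equals 1; consequently the total negative mass of the 24 outer fourth-order PIC weights satisfies -Σ_{γ ∈ Γ4\Γ2} F_γ ≤ 1/2. -/
/-- One-dimensional linear PIC factor `1 - j + (2j - 1)λ` for `j ∈ {0,1}`. -/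
def picW (lam : ℝ) (j : Fin 2) : ℝ := 1 - (j : ℝ) + (2 * (j : ℝ) - 1) * lam

/-- The outer-node one-dimensional factor of fourth-order PIC interpolation:
`e = 0` corresponds to the node index `2`, `e = 1` to the node index `-1`. -/
noncomputable def picOuterFactor (lam : ℝ) (e : Fin 2) : ℝ :=
  if e = 0 then -((1 + lam) * (1 - lam) * lam) / 6
  else -((2 - lam) * lam * (1 - lam)) / 6

lemma picW_sum (lam : ℝ) : (∑ e : Fin 2, picW lam e) = 1 := by
  simp [picW, Fin.sum_univ_two]; ring

lemma pic_prod_sum {ι : Type*} [Fintype ι] [DecidableEq ι] (g : ι → ℝ) :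
    (∑ j : ι → Fin 2, ∏ s, picW (g s) (j s)) = 1 := by
  rw [← Fintype.piFinset_univ, ← Finset.prod_univ_sum]
  have h : ∀ x : ι, picW (g x) 0 + picW (g x) 1 = 1 := fun x => by
    simpa [Fin.sum_univ_two] using picW_sum (g x)
  simp [h]

lemma picOuter_sum (lam : ℝ) :
    (∑ e : Fin 2, picOuterFactor lam e) = -(lam * (1 - lam)) / 2 := by
  simp [picOuterFactor, Fin.sum_univ_two]
  ring

/-- The eight products `∏_s (1 - j_s + (2 j_s - 1) λ_s)` sum to one, and
consequently the total negative mass of the 24 outer fourth-order PIC weights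
is at most `1/2`. -/
theorem outer_pic_weights_total_mass
    (lam : Fin 3 → ℝ) (hlam : ∀ s, lam s ∈ Set.Icc (0 : ℝ) 1) :
    (∑ j : Fin 3 → Fin 2, ∏ s, picW (lam s) (j s)) = 1 ∧
      -(∑ a : Fin 3, ∑ e : Fin 2, picOuterFactor (lam a) e *
          ∑ j : {b : Fin 3 // b ≠ a} → Fin 2, ∏ b, picW (lam b.1) (j b)) ≤ 1 / 2 := by
  constructor
  · exact pic_prod_sum lam
  · have h1 : ∀ a : Fin 3,
        (∑ e : Fin 2, picOuterFactor (lam a) e *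
          ∑ j : {b : Fin 3 // b ≠ a} → Fin 2, ∏ b, picW (lam b.1) (j b))
        = -(lam a * (1 - lam a)) / 2 := by
      intro a
      rw [show (∑ j : {b : Fin 3 // b ≠ a} → Fin 2, ∏ b, picW (lam b.1) (j b)) = 1 from
        pic_prod_sum _]
      simpa using picOuter_sum (lam a)
    rw [Finset.sum_congr rfl (fun a _ => h1 a)]
    rw [Fin.sum_univ_three]
    have h0 := hlam 0
    have h2 := hlam 1
    have h3 := hlam 2
    simp only [Set.mem_Icc] at h0 h2 h3
    nlinarith [sq_nonneg (lam 0 - 1/2), sq_nonneg (lam 1 - 1/2), sq_nonneg (lam 2 - 1/2)]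
end

section
/- Let λ1, λ2, λ3 ∈ [0,1] and let F_γ, X_γ be the second-order trilinear PIC weights and nodes on a grid of spacing h = L/H. Then for g_y(x) = e^{-i⟨y,x⟩}, |g_y(X) − Σ_{γ∈Γ2} F_γ g_y(X_γ)| ≤ (9/2)|y|²(L/H)². -/
/-!
The trilinear weights form a product probability distribution on the cell vertices with mean `X`,
so the rule reproduces affine functions. Writing `⟨y, X_γ⟩ = ⟨y, X⟩ - t_γ`, this gives
`∑ F_γ t_γ = 0`, and the error becomes `|∑ F_γ (e^{i t_γ} - 1 - i t_γ)| ≤ ∑ F_γ t_γ² / 2`.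
Finally `|t_γ| ≤ ∑ₛ |yₛ| h ≤ 3 |y| h`.
-/

open Finset Complex ComplexConjugate

theorem norm_exp_I_mul_ofReal_sub_one_sub_le_of_nonneg {t : ℝ} (ht : 0 ≤ t) :
    ‖exp (I * t) - 1 - I * t‖ ≤ t ^ 2 / 2 := by
  have hderiv : ∀ u : ℝ, HasDerivAt (fun u : ℝ => exp (I * u) - 1 - I * u)
      (I * (exp (I * u) - 1)) u := by
    intro u
    have h1 : HasDerivAt (fun u : ℝ => exp (I * u)) (exp (I * u) * I) u := by
      simpa using (((hasDerivAt_id (u : ℂ)).const_mul I).cexp).comp_ofReal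
    have h2 : HasDerivAt (fun u : ℝ => I * (u : ℂ)) I u := by
      simpa using ((hasDerivAt_id (u : ℂ)).const_mul I).comp_ofReal
    exact ((h1.sub_const 1).sub h2).congr_deriv (by ring)
  refine image_norm_le_of_norm_deriv_right_le_deriv_boundary (a := 0) (b := t)
    (B := fun u => u ^ 2 / 2) (B' := id)
    (fun u _ => (hderiv u).continuousAt.continuousWithinAt)
    (fun u _ => (hderiv u).hasDerivWithinAt) (by simp)
    (fun u => by simpa using (hasDerivAt_pow 2 u).div_const 2) ?_ ⟨ht, le_rfl⟩
  intro u hu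
  rw [norm_mul, norm_I, one_mul]
  simpa [abs_of_nonneg hu.1] using Real.norm_exp_I_mul_ofReal_sub_one_le (x := u)

theorem norm_exp_I_mul_ofReal_sub_one_sub_le (t : ℝ) :
    ‖exp (I * t) - 1 - I * t‖ ≤ t ^ 2 / 2 := by
  rcases le_total 0 t with ht | ht
  · exact norm_exp_I_mul_ofReal_sub_one_sub_le_of_nonneg ht
  · have hconj : exp (I * t) - 1 - I * t = conj (exp (I * (-t : ℝ)) - 1 - I * (-t : ℝ)) := by
      simp [← exp_conj, sub_eq_add_neg]
    rw [hconj, norm_conj, ← neg_sq]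
    exact norm_exp_I_mul_ofReal_sub_one_sub_le_of_nonneg (neg_nonneg.mpr ht)

theorem norm_sum_mul_exp_I_sub_one_le {ι : Type*} [Fintype ι] {w t : ι → ℝ} {δ : ℝ}
    (hw : ∀ i, 0 ≤ w i) (hw_sum : ∑ i, w i = 1) (hwt : ∑ i, w i * t i = 0)
    (ht : ∀ i, |t i| ≤ δ) :
    ‖∑ i, (w i : ℂ) * exp (I * t i) - 1‖ ≤ δ ^ 2 / 2 := by
  have hcentered : ∑ i, (w i : ℂ) * exp (I * t i) - 1
      = ∑ i, (w i : ℂ) * (exp (I * t i) - 1 - I * t i) := by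
    have hw_sum' : ∑ i, (w i : ℂ) = 1 := by exact_mod_cast hw_sum
    have hwt' : ∑ i, (w i : ℂ) * t i = 0 := by exact_mod_cast hwt
    simp only [mul_sub, sum_sub_distrib, mul_one, mul_left_comm _ I, ← mul_sum, hw_sum', hwt',
      mul_zero, sub_zero]
  calc ‖∑ i, (w i : ℂ) * exp (I * t i) - 1‖
      ≤ ∑ i, w i * (t i ^ 2 / 2) := by
        rw [hcentered]
        refine (norm_sum_le _ _).trans (sum_le_sum fun i _ => ?_)
        rw [norm_mul, Complex.norm_of_nonneg (hw i)]
        exact mul_le_mul_of_nonneg_left (norm_exp_I_mul_ofReal_sub_one_sub_le _) (hw i)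
    _ ≤ ∑ i, w i * (δ ^ 2 / 2) := by
        refine sum_le_sum fun i _ => mul_le_mul_of_nonneg_left ?_ (hw i)
        have hsq : t i ^ 2 ≤ δ ^ 2 := sq_le_sq' (abs_le.mp (ht i)).1 (abs_le.mp (ht i)).2
        linarith
    _ = δ ^ 2 / 2 := by rw [← sum_mul, hw_sum, one_mul]

theorem norm_exp_sub_sum_mul_exp_le {ι : Type*} [Fintype ι] {w x : ι → ℝ} {a δ : ℝ}
    (hw : ∀ i, 0 ≤ w i) (hw_sum : ∑ i, w i = 1) (hwx : ∑ i, w i * x i = a)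
    (hx : ∀ i, |x i - a| ≤ δ) :
    ‖exp (-I * a) - ∑ i, (w i : ℂ) * exp (-I * x i)‖ ≤ δ ^ 2 / 2 := by
  have hfactor : exp (-I * a) - ∑ i, (w i : ℂ) * exp (-I * x i)
      = -exp (-I * a) * (∑ i, (w i : ℂ) * exp (I * (a - x i : ℝ)) - 1) := by
    have hshift : ∀ i, exp (-I * x i) = exp (-I * a) * exp (I * (a - x i : ℝ)) := fun i => by
      rw [← exp_add]; push_cast; ring_nf
    simp only [hshift, mul_left_comm (w _ : ℂ), ← mul_sum]
    ring
  have hunit : ‖exp (-I * a)‖ = 1 := by simpa using norm_exp_I_mul_ofReal (-a)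
  rw [hfactor, norm_mul, norm_neg, hunit, one_mul]
  refine norm_sum_mul_exp_I_sub_one_le hw hw_sum ?_ fun i => by rw [abs_sub_comm]; exact hx i
  simp only [mul_sub, sum_sub_distrib, ← sum_mul, hw_sum, one_mul, hwx, sub_self]

theorem sum_prod_mul_apply {ι κ R : Type*} [Fintype ι] [DecidableEq ι] [Fintype κ]
    [CommSemiring R] (f : ι → κ → R) (g : κ → R) (i : ι) :
    ∑ x : ι → κ, (∏ s, f s (x s)) * g (x i)
      = (∑ c, f i c * g c) * ∏ s ∈ univ.erase i, ∑ c, f s c := by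
  set f' := Function.update f i fun c => f i c * g c
  have hf'_self : f' i = fun c => f i c * g c := Function.update_self _ _ _
  have hf'_ne : ∀ s ∈ univ.erase i, f' s = f s := fun s hs =>
    Function.update_of_ne (ne_of_mem_erase hs) _ _
  calc ∑ x : ι → κ, (∏ s, f s (x s)) * g (x i)
      = ∑ x : ι → κ, ∏ s, f' s (x s) := by
        refine sum_congr rfl fun x _ => ?_
        rw [← mul_prod_erase _ _ (mem_univ i), ← mul_prod_erase _ _ (mem_univ i),
          prod_congr rfl fun s hs => congrFun (hf'_ne s hs) (x s), hf'_self, mul_right_comm]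
    _ = ∏ s, ∑ c, f' s c := (Fintype.prod_sum f').symm
    _ = (∑ c, f i c * g c) * ∏ s ∈ univ.erase i, ∑ c, f s c := by
        rw [← mul_prod_erase _ _ (mem_univ i), prod_congr rfl fun s hs => by rw [hf'_ne s hs],
          hf'_self]

def linearWeight (t : ℝ) (c : Fin 2) : ℝ := 1 - c + (2 * c - 1) * t

@[simp] theorem linearWeight_zero (t : ℝ) : linearWeight t 0 = 1 - t := by
  simp [linearWeight, sub_eq_add_neg]

@[simp] theorem linearWeight_one (t : ℝ) : linearWeight t 1 = t := by
  norm_num [linearWeight]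

theorem linearWeight_nonneg {t : ℝ} (ht : t ∈ Set.Icc 0 1) (c : Fin 2) :
    0 ≤ linearWeight t c := by
  fin_cases c <;> simp [ht.1, ht.2]

theorem sum_linearWeight (t : ℝ) : ∑ c, linearWeight t c = 1 := by
  simp [Fin.sum_univ_two]

theorem sum_linearWeight_mul (t : ℝ) : ∑ c, linearWeight t c * c = t := by
  simp [Fin.sum_univ_two]

def multilinearWeight {ι : Type*} [Fintype ι] (lam : ι → ℝ) (j : ι → Fin 2) : ℝ :=
  ∏ s, linearWeight (lam s) (j s)

theorem multilinearWeight_nonneg {ι : Type*} [Fintype ι] {lam : ι → ℝ}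
    (hlam : ∀ s, lam s ∈ Set.Icc 0 1) (j : ι → Fin 2) :
    0 ≤ multilinearWeight lam j :=
  prod_nonneg fun s _ => linearWeight_nonneg (hlam s) (j s)

section multilinearWeight

variable {ι : Type*} [Fintype ι] [DecidableEq ι] (lam : ι → ℝ)

theorem sum_multilinearWeight : ∑ j, multilinearWeight lam j = 1 := by
  simp only [multilinearWeight, ← Fintype.prod_sum, sum_linearWeight, prod_const_one]

theorem sum_multilinearWeight_mul_apply (i : ι) :
    ∑ j, multilinearWeight lam j * (j i : ℝ) = lam i := by
  refine (sum_prod_mul_apply (fun s => linearWeight (lam s)) (fun c => (c : ℝ)) i).trans ?_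
  simp only [sum_linearWeight_mul, sum_linearWeight, prod_const_one, mul_one]

theorem sum_multilinearWeight_mul_affine (b : ℝ) (a : ι → ℝ) :
    ∑ j, multilinearWeight lam j * (b + ∑ s, a s * j s) = b + ∑ s, a s * lam s := by
  simp only [mul_add, mul_sum, sum_add_distrib, ← sum_mul, sum_multilinearWeight, one_mul]
  rw [sum_comm]
  simp only [mul_left_comm _ (a _), ← mul_sum, sum_multilinearWeight_mul_apply]

end multilinearWeight

theorem abs_sum_mul_le_card_mul {ι : Type*} [Fintype ι] (y : EuclideanSpace ℝ ι) {d : ι → ℝ}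
    {M : ℝ} (hd : ∀ s, |d s| ≤ M) :
    |∑ s, y s * d s| ≤ Fintype.card ι * (‖y‖ * M) := by
  calc |∑ s, y s * d s| ≤ ∑ s, |y s| * |d s| := by
        simpa only [abs_mul] using abs_sum_le_sum_abs (fun s => y s * d s) univ
    _ ≤ ∑ _s : ι, ‖y‖ * M := sum_le_sum fun s _ =>
        mul_le_mul (PiLp.norm_apply_le y s) (hd s) (abs_nonneg _) (norm_nonneg y)
    _ = Fintype.card ι * (‖y‖ * M) := by rw [sum_const, card_univ, nsmul_eq_mul]

theorem abs_coe_fin_two_sub_le_one {t : ℝ} (ht : t ∈ Set.Icc 0 1) (c : Fin 2) :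
    |(c : ℝ) - t| ≤ 1 := by
  fin_cases c <;> simp [abs_le, ht.1, ht.2] <;> linarith [ht.1, ht.2]

open Finset in
theorem trilinear_pic_exp_error_general
    (lam : Fin 3 → ℝ) (hlam : ∀ s, lam s ∈ Set.Icc (0 : ℝ) 1)
    (L : ℝ) (H : ℝ)
    (base : EuclideanSpace ℝ (Fin 3))
    (X : EuclideanSpace ℝ (Fin 3)) (hX : ∀ s, X s = base s + lam s * (L / H))
    (Xg : (Fin 3 → Fin 2) → EuclideanSpace ℝ (Fin 3))
    (hXg : ∀ j s, Xg j s = base s + (j s : ℝ) * (L / H))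
    (y : EuclideanSpace ℝ (Fin 3)) :
    ‖Complex.exp (-Complex.I * ((∑ s, y s * X s : ℝ) : ℂ)) -
        ∑ j : Fin 3 → Fin 2,
          ((∏ s, (1 - (j s : ℝ) + (2 * (j s : ℝ) - 1) * lam s) : ℝ) : ℂ) *
            Complex.exp (-Complex.I * ((∑ s, y s * Xg j s : ℝ) : ℂ))‖ ≤
      (9 / 2) * ‖y‖ ^ 2 * (L / H) ^ 2 := by
  set h := L / H
  have hphase : ∀ (μ : Fin 3 → ℝ) (P : EuclideanSpace ℝ (Fin 3)),
      (∀ s, P s = base s + μ s * h) → ∑ s, y s * P s = ∑ s, y s * base s + ∑ s, y s * h * μ s :=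
    fun μ P hP => by rw [← sum_add_distrib]; exact sum_congr rfl fun s _ => by rw [hP]; ring
  have hXg' : ∀ j, ∑ s, y s * Xg j s = ∑ s, y s * base s + ∑ s, y s * h * (j s : ℝ) :=
    fun j => hphase _ _ (hXg j)
  have hdist : ∀ j, |∑ s, y s * Xg j s - ∑ s, y s * X s| ≤ 3 * (‖y‖ * |h|) := by
    intro j
    have hdiff : ∑ s, y s * Xg j s - ∑ s, y s * X s = ∑ s, y s * (((j s : ℝ) - lam s) * h) := by
      rw [← sum_sub_distrib]; exact sum_congr rfl fun s _ => by rw [hX, hXg]; ring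
    rw [hdiff]
    simpa using abs_sum_mul_le_card_mul y fun s => by
      rw [abs_mul]
      exact mul_le_of_le_one_left (abs_nonneg h) (abs_coe_fin_two_sub_le_one (hlam s) (j s))
  refine (norm_exp_sub_sum_mul_exp_le (w := multilinearWeight lam)
    (multilinearWeight_nonneg hlam) (sum_multilinearWeight lam) ?_ hdist).trans_eq ?_
  · simp only [hXg', hphase lam X hX, sum_multilinearWeight_mul_affine]
  · rw [mul_pow, mul_pow, sq_abs]; ring

open Finset in
/-- Second-order (trilinear) PIC interpolation error bound for the complex
exponential `g_y(x) = exp(-i⟨y,x⟩)`: the error is at most `(9/2)|y|²(L/H)²`. -/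
theorem trilinear_pic_exp_error
    (lam : Fin 3 → ℝ) (hlam : ∀ s, lam s ∈ Set.Icc (0 : ℝ) 1)
    (L : ℝ) (H : ℝ) (hL : 0 < L) (hH : 0 < H)
    (base : EuclideanSpace ℝ (Fin 3))
    (X : EuclideanSpace ℝ (Fin 3)) (hX : ∀ s, X s = base s + lam s * (L / H))
    (Xg : (Fin 3 → Fin 2) → EuclideanSpace ℝ (Fin 3))
    (hXg : ∀ j s, Xg j s = base s + (j s : ℝ) * (L / H))
    (y : EuclideanSpace ℝ (Fin 3)) :
    ‖Complex.exp (-Complex.I * ((∑ s, y s * X s : ℝ) : ℂ)) -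
        ∑ j : Fin 3 → Fin 2,
          ((∏ s, (1 - (j s : ℝ) + (2 * (j s : ℝ) - 1) * lam s) : ℝ) : ℂ) *
            Complex.exp (-Complex.I * ((∑ s, y s * Xg j s : ℝ) : ℂ))‖ ≤
      (9 / 2) * ‖y‖ ^ 2 * (L / H) ^ 2 :=
  trilinear_pic_exp_error_general lam hlam L H base X hX Xg hXg y
end
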